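/- arXiv:1905.03910 — 6 statements merged into one kernel-verified Lean document; each statement's English description precedes it below -/
import Mathlib

section
/- Let m ≤ n be positive integers and let v_1, …, v_m be an orthogonal m-system in ℂ^n. Then C[v_1|v_m] P[v_1|v_m] = P[v_1|v_m] C[v_1|v_m] = P[v_1|v_m] C[v_1|v_m] P[v_1|v_m], and moreover P[v_1|v_m] C[v_1|v_m] P[v_1|v_m] = (1/(v_m^* v_m)) v_1 v_m^* + Σ_{j=1}^{m−1} (1/(v_j^* v_j)) v_{j+1} v_j^*. -/
/-!
Orthogonality makes `P` fix every `v i` from both sides: `P v_i = v_i` and `v_i^* P = v_i^*`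
(when `v_i = 0` both sides vanish, so the junk value `0⁻¹ = 0` is harmless). Hence `P` absorbs
every rank-one matrix `v_i w^*` on the left and `w v_j^*` on the right. The cyclic sum `S` is a
sum of such matrices, so `P S = S P = S`, `P² = P`, and `C P = S + P - P = S = P C`.
-/

open Matrix BigOperators

/-- `P[v_1|v_m] = Σ_{j=1}^m (1/(v_j^* v_j)) v_j v_j^*`. -/
noncomputable def projSys {n m : ℕ} (v : Fin m → Fin n → ℂ) : Matrix (Fin n) (Fin n) ℂ :=
  ∑ j, ((star (v j) ⬝ᵥ v j)⁻¹) • Matrix.vecMulVec (v j) (star (v j))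

/-- `C[v_1|v_m] = (1/(v_m^* v_m)) v_1 v_m^* + Σ_{j=1}^{m−1} (1/(v_j^* v_j)) v_{j+1} v_j^*
  + 1_n − P[v_1|v_m]`, written with cyclic successor on `Fin m`. -/
noncomputable def cycSys {n m : ℕ} [NeZero m] (v : Fin m → Fin n → ℂ) :
    Matrix (Fin n) (Fin n) ℂ :=
  (∑ j, ((star (v j) ⬝ᵥ v j)⁻¹) • Matrix.vecMulVec (v (j + 1)) (star (v j))) + 1 - projSys v

open ComplexOrder in
lemma dotProduct_star_self_inv_smul_smul {ι M : Type*} [Fintype ι] [AddCommGroup M] [Module ℂ M]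
    {w : ι → ℂ} {x : M} (h : w = 0 → x = 0) : (star w ⬝ᵥ w)⁻¹ • (star w ⬝ᵥ w) • x = x := by
  by_cases hw : w = 0
  · simp [h hw]
  · exact inv_smul_smul₀ (dotProduct_star_self_eq_zero.not.mpr hw) x

section OrthogonalSystem

variable {n m : ℕ} {v : Fin m → Fin n → ℂ} (horth : ∀ j k, j ≠ k → star (v j) ⬝ᵥ v k = 0)
include horth

lemma projSys_mulVec (i : Fin m) : projSys v *ᵥ v i = v i := by
  rw [projSys, sum_mulVec, Finset.sum_eq_single i]
  · rw [smul_mulVec, vecMulVec_mulVec, op_smul_eq_smul]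
    exact dotProduct_star_self_inv_smul_smul id
  · intro j _ hji
    rw [smul_mulVec, vecMulVec_mulVec, horth j i hji, MulOpposite.op_zero, zero_smul, smul_zero]
  · simp

lemma vecMul_projSys (i : Fin m) : star (v i) ᵥ* projSys v = star (v i) := by
  rw [projSys, vecMul_sum, Finset.sum_eq_single i]
  · rw [vecMul_smul, vecMul_vecMulVec]
    exact dotProduct_star_self_inv_smul_smul fun h => by rw [h, star_zero]
  · intro j _ hji
    rw [vecMul_smul, vecMul_vecMulVec, horth i j hji.symm, zero_smul, smul_zero]
  · simp

lemma projSys_mul_sum_smul_vecMulVec {ι : Type*} [Fintype ι] (f : ι → Fin m) (c : ι → ℂ)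
    (w : ι → Fin n → ℂ) :
    projSys v * ∑ k, c k • vecMulVec (v (f k)) (w k) = ∑ k, c k • vecMulVec (v (f k)) (w k) := by
  simp_rw [Finset.mul_sum, Matrix.mul_smul, mul_vecMulVec, projSys_mulVec horth]

lemma sum_smul_vecMulVec_mul_projSys (c : Fin m → ℂ) (w : Fin m → Fin n → ℂ) :
    (∑ k, c k • vecMulVec (w k) (star (v k))) * projSys v =
      ∑ k, c k • vecMulVec (w k) (star (v k)) := by
  simp_rw [Finset.sum_mul, Matrix.smul_mul, vecMulVec_mul, vecMul_projSys horth]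

lemma isIdempotentElem_projSys : IsIdempotentElem (projSys v) :=
  sum_smul_vecMulVec_mul_projSys horth _ v

variable [NeZero m]

lemma cycSys_mul_projSys :
    cycSys v * projSys v = ∑ j, (star (v j) ⬝ᵥ v j)⁻¹ • vecMulVec (v (j + 1)) (star (v j)) := by
  rw [cycSys, sub_mul, add_mul, sum_smul_vecMulVec_mul_projSys horth, one_mul,
    (isIdempotentElem_projSys horth).eq, add_sub_cancel_right]

lemma projSys_mul_cycSys :
    projSys v * cycSys v = ∑ j, (star (v j) ⬝ᵥ v j)⁻¹ • vecMulVec (v (j + 1)) (star (v j)) := by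
  rw [cycSys, mul_sub, mul_add, projSys_mul_sum_smul_vecMulVec horth (· + 1), mul_one,
    (isIdempotentElem_projSys horth).eq, add_sub_cancel_right]

end OrthogonalSystem

theorem stmt_2_general (n m : ℕ) [NeZero m]
    (v : Fin m → Fin n → ℂ)
    (horth : ∀ j k, j ≠ k → star (v j) ⬝ᵥ v k = 0) :
    cycSys v * projSys v = projSys v * cycSys v ∧
    projSys v * cycSys v = projSys v * cycSys v * projSys v ∧
    projSys v * cycSys v * projSys v =
      ∑ j, ((star (v j) ⬝ᵥ v j)⁻¹) • Matrix.vecMulVec (v (j + 1)) (star (v j)) := by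
  have hPCP : projSys v * cycSys v * projSys v = projSys v * cycSys v := by
    rw [projSys_mul_cycSys horth, sum_smul_vecMulVec_mul_projSys horth]
  refine ⟨?_, hPCP.symm, ?_⟩
  · rw [cycSys_mul_projSys horth, projSys_mul_cycSys horth]
  · rw [hPCP, projSys_mul_cycSys horth]

/-- for an orthogonal `m`-system in `ℂ^n` (`m ≤ n` positive),
`C P = P C = P C P`, and `P C P = (1/(v_m^* v_m)) v_1 v_m^* + Σ_{j=1}^{m−1}
(1/(v_j^* v_j)) v_{j+1} v_j^*` (the cyclic sum). -/
theorem stmt_2 (n m : ℕ) [NeZero m] (hmn : m ≤ n)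
    (v : Fin m → Fin n → ℂ)
    (hnz : ∀ j, v j ≠ 0)
    (horth : ∀ j k, j ≠ k → star (v j) ⬝ᵥ v k = 0) :
    cycSys v * projSys v = projSys v * cycSys v ∧
    projSys v * cycSys v = projSys v * cycSys v * projSys v ∧
    projSys v * cycSys v * projSys v =
      ∑ j, ((star (v j) ⬝ᵥ v j)⁻¹) • Matrix.vecMulVec (v (j + 1)) (star (v j)) :=
  stmt_2_general n m v horth
end

section
/- Let m ≤ n be positive integers and let v_1, …, v_m be an orthogonal m-system in ℂ^n. Then C[v_1|v_m]^m = 1_n. -/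
open Matrix BigOperators

noncomputable def Sk {n m : ℕ} [NeZero m] (v : Fin m → Fin n → ℂ) (a : Fin m) :
    Matrix (Fin n) (Fin n) ℂ :=
  ∑ j, ((star (v j) ⬝ᵥ v j)⁻¹) • Matrix.vecMulVec (v (j + a)) (star (v j))

lemma vmv_mul {n : ℕ} (x y z w : Fin n → ℂ) :
    Matrix.vecMulVec x y * Matrix.vecMulVec z w = (y ⬝ᵥ z) • Matrix.vecMulVec x w := by
  ext i k
  simp [Matrix.mul_apply, Matrix.vecMulVec_apply, dotProduct, Finset.mul_sum, Finset.sum_mul]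
  apply Finset.sum_congr rfl; intros; ring

lemma Sk_mul {n m : ℕ} [NeZero m] (v : Fin m → Fin n → ℂ)
    (hnz : ∀ j, v j ≠ 0)
    (horth : ∀ j k, j ≠ k → star (v j) ⬝ᵥ v k = 0) (a b : Fin m) :
    Sk v a * Sk v b = Sk v (a + b) := by
  have hc : ∀ j, (star (v j) ⬝ᵥ v j) ≠ 0 := by
    intro j h
    apply hnz j
    have h2 : ∑ i, Complex.normSq (v j i) = 0 := by
      have : (star (v j) ⬝ᵥ v j) = ((∑ i, Complex.normSq (v j i) : ℝ) : ℂ) := by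
        push_cast
        simp [dotProduct, Complex.normSq_eq_conj_mul_self]
      rw [this] at h
      exact_mod_cast h
    funext i
    have := (Finset.sum_eq_zero_iff_of_nonneg (fun i _ => Complex.normSq_nonneg (v j i))).mp h2 i (Finset.mem_univ i)
    simpa using Complex.normSq_eq_zero.mp this
  unfold Sk
  rw [Finset.sum_mul_sum]
  rw [Finset.sum_comm]
  apply Finset.sum_congr rfl
  intro l _
  rw [Finset.sum_eq_single (l + b)]
  · rw [smul_mul_smul_comm, vmv_mul]
    have : star (v (l + b)) ⬝ᵥ v (l + b) ≠ 0 := hc _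
    rw [smul_smul]
    congr 1
    · rw [mul_comm ((star (v (l + b)) ⬝ᵥ v (l + b))⁻¹), mul_assoc,
        inv_mul_cancel₀ this, mul_one]
    · congr 1; rw [add_assoc, add_comm b a]
  · intro j _ hj
    rw [smul_mul_smul_comm, vmv_mul, horth j (l + b) hj]
    simp
  · simp

lemma cycSys_eq {n m : ℕ} [NeZero m] (v : Fin m → Fin n → ℂ) :
    cycSys v = Sk v 1 + 1 - Sk v 0 := by
  have : projSys v = Sk v 0 := by simp [projSys, Sk]
  rw [cycSys, this, Sk]
  simp [Sk]

open Fin.NatCast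

/-- for an orthogonal `m`-system in `ℂ^n` (`m ≤ n` positive),
`C[v_1|v_m]^m = 1_n`. -/
theorem stmt_4 (n m : ℕ) [NeZero m] (hmn : m ≤ n)
    (v : Fin m → Fin n → ℂ)
    (hnz : ∀ j, v j ≠ 0)
    (horth : ∀ j k, j ≠ k → star (v j) ⬝ᵥ v k = 0) :
    cycSys v ^ m = 1 := by
  have key : ∀ k : ℕ, cycSys v ^ k = Sk v (k : Fin m) + 1 - Sk v 0 := by
    intro k
    induction k with
    | zero => simp [pow_zero]
    | succ k ih =>
      have hcast : ((k + 1 : ℕ) : Fin m) = (k : Fin m) + 1 := by push_cast; ring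
      rw [pow_succ', ih, cycSys_eq, hcast]
      have h1 : Sk v 1 * Sk v (k : Fin m) = Sk v ((k : Fin m) + 1) := by
        rw [Sk_mul v hnz horth]; rw [add_comm]
      have h2 : Sk v 1 * Sk v 0 = Sk v 1 := by rw [Sk_mul v hnz horth]; rw [add_zero]
      have h3 : Sk v 0 * Sk v (k : Fin m) = Sk v (k : Fin m) := by
        rw [Sk_mul v hnz horth]; rw [zero_add]
      have h4 : Sk v 0 * Sk v 0 = Sk v 0 := by rw [Sk_mul v hnz horth]; rw [add_zero]
      rw [sub_mul, add_mul, mul_sub, mul_sub, mul_sub, one_mul, mul_add, mul_add, mul_one,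
        mul_one, h1, h2, h3, h4]
      simp only [one_mul]
      abel
  have : ((m : ℕ) : Fin m) = 0 := by simp
  rw [key m, this]
  abel
end

section
/- Let m ≤ n be positive integers and let v_1, …, v_m be an orthogonal m-system in ℂ^n. Then the minimal polynomial of the matrix C[v_1|v_m] over ℂ is z^m − 1. -/
open Matrix Polynomial BigOperators

lemma vMv_mul_vMv {n : ℕ} (a b c d : Fin n → ℂ) :
    vecMulVec a b * vecMulVec c d = (b ⬝ᵥ c) • vecMulVec a d := by
  ext i j
  simp only [mul_apply, vecMulVec_apply, Matrix.smul_apply, dotProduct, Finset.sum_mul, smul_eq_mul]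
  congr 1; ext k; ring

lemma vMv_mulVec {n : ℕ} (a b x : Fin n → ℂ) :
    vecMulVec a b *ᵥ x = (b ⬝ᵥ x) • a := by
  ext i
  simp only [mulVec, vecMulVec_apply, dotProduct, Pi.smul_apply, smul_eq_mul, Finset.sum_mul]
  congr 1; ext k; ring

lemma sum_mulVec' {n m : ℕ} (A : Fin m → Matrix (Fin n) (Fin n) ℂ) (x : Fin n → ℂ) :
    (∑ j, A j) *ᵥ x = ∑ j, A j *ᵥ x := by
  ext i
  simp only [mulVec, dotProduct, Finset.sum_apply, Finset.sum_mul, Matrix.sum_apply]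
  exact Finset.sum_comm

open Fin.NatCast

/-- for an orthogonal `m`-system in `ℂ^n` (`m ≤ n` positive), the minimal
polynomial of `C[v_1|v_m]` over `ℂ` is `z^m − 1`. -/
theorem stmt_5 (n m : ℕ) [NeZero m] (hmn : m ≤ n)
    (v : Fin m → Fin n → ℂ)
    (hnz : ∀ j, v j ≠ 0)
    (horth : ∀ j k, j ≠ k → star (v j) ⬝ᵥ v k = 0) :
    minpoly ℂ (cycSys v) = X ^ m - 1 := by
  have hm : 0 < m := Nat.pos_of_ne_zero (NeZero.ne m)
  have hd : ∀ j, star (v j) ⬝ᵥ v j ≠ 0 := by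
    intro j h
    apply hnz j
    have h2 : ∑ i, Complex.normSq (v j i) = 0 := by
      have h3 : (↑(∑ i, Complex.normSq (v j i)) : ℂ) = 0 := by
        rw [← h]
        simp only [dotProduct, Pi.star_apply, Complex.star_def, Complex.ofReal_sum]
        exact Finset.sum_congr rfl fun i _ => by
          rw [mul_comm, Complex.mul_conj]
      exact_mod_cast h3
    funext i
    exact Complex.normSq_eq_zero.mp
      ((Finset.sum_eq_zero_iff_of_nonneg (fun i _ => Complex.normSq_nonneg _)).mp h2 i
        (Finset.mem_univ i))
  set c : Fin m → ℂ := fun j => (star (v j) ⬝ᵥ v j)⁻¹ with hc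
  set S : ℕ → Matrix (Fin n) (Fin n) ℂ :=
    fun k => ∑ j, c j • vecMulVec (v (j + (k : Fin m))) (star (v j)) with hSdef
  have hS0 : S 0 = projSys v := by
    simp only [hSdef, hc, projSys, Nat.cast_zero, add_zero]
  have hCS : cycSys v = S 1 + 1 - S 0 := by
    rw [hS0]; simp only [cycSys, hSdef, hc, Nat.cast_one]
  -- product rule
  have hmul : ∀ k l : ℕ, S k * S l = S (k + l) := by
    intro k l
    simp only [hSdef, Finset.sum_mul, Finset.mul_sum, smul_mul_assoc, mul_smul_comm,
      vMv_mul_vMv, Finset.smul_sum]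
    refine Finset.sum_congr rfl fun i _ => ?_
    rw [Finset.sum_eq_single (i + (l : Fin m))]
    · have : i + (l : Fin m) + (k : Fin m) = i + ((k + l : ℕ) : Fin m) := by
        push_cast; ac_rfl
      rw [this, smul_smul, smul_smul]
      congr 1
      rw [mul_assoc, inv_mul_cancel₀ (hd _), mul_one]
    · intro j _ hj
      rw [horth j (i + (l : Fin m)) hj, zero_smul, smul_zero, smul_zero]
    · intro h; exact absurd (Finset.mem_univ _) h
  -- powers of cycSys
  have hpow : ∀ k : ℕ, (cycSys v) ^ (k + 1) = S (k + 1) + 1 - S 0 := by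
    intro k
    induction k with
    | zero => rw [pow_one, hCS]
    | succ k ih =>
      rw [pow_succ, ih, hCS]
      calc (S (k + 1) + 1 - S 0) * (S 1 + 1 - S 0)
          = S (k + 1) * S 1 - S (k + 1) * S 0 - S 0 * S 1 + S 0 * S 0
            + S (k + 1) + S 1 - S 0 - S 0 + 1 := by noncomm_ring
        _ = S (k + 2) + 1 - S 0 := by
            rw [hmul (k + 1) 1, hmul (k + 1) 0, hmul 0 1, hmul 0 0]
            abel
  have hCm : (cycSys v) ^ m = 1 := by
    obtain ⟨m', rfl⟩ : ∃ m', m = m' + 1 := ⟨m - 1, (Nat.succ_pred_eq_of_pos hm).symm⟩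
    rw [hpow m']
    have : S (m' + 1) = S 0 := by
      simp only [hSdef, Nat.cast_zero, add_zero, Fin.natCast_self]
    rw [this]; abel
  -- action on the vectors
  have hSv : ∀ (l : ℕ) (k : Fin m), S l *ᵥ v k = v (k + (l : Fin m)) := by
    intro l k
    simp only [hSdef]
    rw [sum_mulVec']
    rw [Finset.sum_eq_single k]
    · rw [smul_mulVec, vMv_mulVec, smul_smul, inv_mul_cancel₀ (hd _), one_smul]
    · intro j _ hj
      rw [smul_mulVec, vMv_mulVec, horth j k hj, zero_smul, smul_zero]
    · intro h; exact absurd (Finset.mem_univ _) h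
  have hstep : ∀ k : Fin m, cycSys v *ᵥ v k = v (k + 1) := by
    intro k
    rw [hCS, Matrix.sub_mulVec, Matrix.add_mulVec, Matrix.one_mulVec, hSv, hSv]
    simp only [Nat.cast_one, Nat.cast_zero, add_zero]
    abel
  -- eigenvectors
  have heig : ∀ ζ : ℂ, ζ ^ m = 1 → ∃ w : Fin n → ℂ, w ≠ 0 ∧ cycSys v *ᵥ w = ζ • w := by
    intro ζ hζ
    have hζ0 : ζ ≠ 0 := by
      intro h; rw [h, zero_pow (NeZero.ne m)] at hζ; exact zero_ne_one hζ
    refine ⟨∑ k : Fin m, ζ ^ (m - 1 - (k : ℕ)) • v k, ?_, ?_⟩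
    · intro h0
      have h1 : star (v 0) ⬝ᵥ (∑ k : Fin m, ζ ^ (m - 1 - (k : ℕ)) • v k)
          = ∑ k : Fin m, ζ ^ (m - 1 - (k : ℕ)) * (star (v 0) ⬝ᵥ v k) := by
        simp only [dotProduct, Finset.sum_apply, Pi.smul_apply, smul_eq_mul, Finset.mul_sum]
        rw [Finset.sum_comm]
        exact Finset.sum_congr rfl fun k _ => Finset.sum_congr rfl fun i _ => by ring
      rw [h0, dotProduct_zero, Finset.sum_eq_single (0 : Fin m)] at h1
      · rcases mul_eq_zero.mp h1.symm with h | h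
        · exact pow_ne_zero _ hζ0 h
        · exact hd 0 h
      · intro j _ hj
        rw [horth 0 j (Ne.symm hj), mul_zero]
      · intro h; exact absurd (Finset.mem_univ _) h
    · have hlin : cycSys v *ᵥ (∑ k : Fin m, ζ ^ (m - 1 - (k : ℕ)) • v k)
          = ∑ k : Fin m, ζ ^ (m - 1 - (k : ℕ)) • (cycSys v *ᵥ v k) := by
        rw [← Matrix.mulVecLin_apply, map_sum]
        exact Finset.sum_congr rfl fun k _ => by
          rw [LinearMap.map_smul, Matrix.mulVecLin_apply]
      rw [hlin, Finset.smul_sum]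
      refine Fintype.sum_equiv (Equiv.addRight (1 : Fin m)) _ _ fun k => ?_
      rw [hstep]
      simp only [Equiv.coe_addRight, smul_smul]
      congr 1
      -- ζ ^ (m - 1 - k) = ζ * ζ ^ (m - 1 - ((k+1 : Fin m) : ℕ))
      have hv1 : ((k + 1 : Fin m) : ℕ) = ((k : ℕ) + 1) % m := by
        rw [Fin.val_add, Fin.val_one']
        conv_rhs => rw [Nat.add_mod, Nat.mod_eq_of_lt k.isLt]
      rcases lt_or_ge ((k : ℕ) + 1) m with hlt | hge
      · rw [hv1, Nat.mod_eq_of_lt hlt,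
          show m - 1 - (k : ℕ) = (m - 1 - ((k : ℕ) + 1)) + 1 by omega, pow_succ']
      · have hk : (k : ℕ) + 1 = m := le_antisymm k.isLt hge
        rw [hv1, hk, Nat.mod_self, Nat.sub_zero,
          show m - 1 - (k : ℕ) = 0 by omega, ← pow_succ',
          show m - 1 + 1 = m by omega, hζ, pow_zero]
  -- integrality and divisibility
  have hint : IsIntegral ℂ (cycSys v) := Algebra.IsIntegral.isIntegral _
  have hmonic : (X ^ m - 1 : ℂ[X]).Monic := by
    have h := monic_X_pow_sub_C (1 : ℂ) (NeZero.ne m)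
    rwa [Polynomial.C_1] at h
  have hXm : (X ^ m - 1 : ℂ[X]) ≠ 0 := hmonic.ne_zero
  have hdvd : minpoly ℂ (cycSys v) ∣ X ^ m - 1 := by
    apply minpoly.dvd
    rw [map_sub, map_pow, aeval_X, _root_.map_one, hCm, sub_self]
  -- every m-th root of unity is a root of the minimal polynomial
  have hroot : ∀ ζ : ℂ, ζ ^ m = 1 → (minpoly ℂ (cycSys v)).eval ζ = 0 := by
    intro ζ hζ
    obtain ⟨w, hw0, hw⟩ := heig ζ hζ
    have key : ∀ p : ℂ[X], (aeval (cycSys v) p) *ᵥ w = p.eval ζ • w := by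
      intro p
      induction p using Polynomial.induction_on with
      | C a =>
        rw [aeval_C, eval_C, Algebra.algebraMap_eq_smul_one, smul_mulVec,
          Matrix.one_mulVec]
      | add p q hp hq =>
        rw [map_add, Matrix.add_mulVec, hp, hq, eval_add, add_smul]
      | monomial k a ih =>
        rw [pow_succ, ← mul_assoc, _root_.map_mul, aeval_X, ← Matrix.mulVec_mulVec, hw,
          Matrix.mulVec_smul, ih]
        simp only [eval_mul, eval_C, eval_pow, eval_X, smul_smul]
        congr 1
        ring
    have h0 := key (minpoly ℂ (cycSys v))
    rw [minpoly.aeval, Matrix.zero_mulVec] at h0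
    rcases smul_eq_zero.mp h0.symm with h | h
    · exact h
    · exact absurd h hw0
  -- degree comparison
  have hmp0 : minpoly ℂ (cycSys v) ≠ 0 := minpoly.ne_zero hint
  have hsub : nthRootsFinset m (1 : ℂ) ⊆ (minpoly ℂ (cycSys v)).roots.toFinset := by
    intro ζ hζ
    rw [Multiset.mem_toFinset, mem_roots hmp0]
    exact hroot ζ ((mem_nthRootsFinset hm (1 : ℂ)).mp hζ)
  have hdeg : m ≤ (minpoly ℂ (cycSys v)).natDegree := by
    calc m = (nthRootsFinset m (1 : ℂ)).card :=
          ((Complex.isPrimitiveRoot_exp m (NeZero.ne m)).card_nthRootsFinset).symm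
      _ ≤ (minpoly ℂ (cycSys v)).roots.toFinset.card := Finset.card_le_card hsub
      _ ≤ Multiset.card (minpoly ℂ (cycSys v)).roots := Multiset.toFinset_card_le _
      _ ≤ (minpoly ℂ (cycSys v)).natDegree := card_roots' _
  have hdeg2 : (X ^ m - 1 : ℂ[X]).natDegree ≤ (minpoly ℂ (cycSys v)).natDegree := by
    have h : (X ^ m - 1 : ℂ[X]).natDegree = m := by
      have h2 := natDegree_X_pow_sub_C (n := m) (r := (1 : ℂ))
      rwa [Polynomial.C_1] at h2
    omega
  exact eq_of_monic_of_associated (minpoly.monic hint) hmonic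
    (associated_of_dvd_of_natDegree_le hdvd hXm hdeg2)
end

section
/- Let T, n be positive integers with 2T ≤ n, and let v_1, …, v_T ∈ ℂ^n be nonzero linearly independent vectors satisfying v_{k+1} = Θ_k(v_1) for a discrete-time T-periodic dynamical system (Σ, {Θ_t}). Then there exist a matrix V̂ ∈ ℂ^{n×T} with V̂^*V̂ = 1_T, orthogonal projections K̂, T̂ ∈ ℂ^{n×n}, and polynomials p_0, …, p_{T−1} ∈ ℂ[z] such that K̂ V̂ p_k(C_T) V̂^* T̂ v_1 = v_{k+1} for every 0 ≤ k ≤ T−1, where C_T ∈ ℂ^{T×T} is the cyclic shift matrix; moreover C_T is unitary and C_T^T = 1_T, so k ↦ C_T^k defines a unitary representation of ℤ/T and the matrices p_k(C_T) lie in the circulant algebra Circ(T). -/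
open Matrix Polynomial BigOperators
open Fin.NatCast

def cShift (T : ℕ) [NeZero T] : Matrix (Fin T) (Fin T) ℂ :=
  Matrix.of fun i j => if i = j + 1 then 1 else 0

lemma cShift_pow (T : ℕ) [NeZero T] (m : ℕ) :
    cShift T ^ m = Matrix.of fun i j => if i = j + (m : Fin T) then 1 else 0 := by
  induction m with
  | zero => ext i j; simp [Matrix.one_apply, eq_comm]
  | succ m ih =>
    ext i j
    rw [pow_succ, ih]
    simp only [Matrix.mul_apply, Matrix.of_apply, cShift]
    rw [Finset.sum_eq_single (j + 1)]
    · have : j + 1 + (m : Fin T) = j + ((m : ℕ) + 1 : ℕ) := by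
        push_cast; abel
      rw [this]; simp
    · intro b _ hb; simp [hb]
    · simp

lemma cShift_unitary_left (T : ℕ) [NeZero T] : (cShift T)ᴴ * cShift T = 1 := by
  ext i j
  simp only [Matrix.mul_apply, Matrix.conjTranspose_apply, cShift, Matrix.of_apply]
  rw [Finset.sum_eq_single (i + 1)]
  · by_cases h : i = j
    · simp [h, Matrix.one_apply]
    · have h' : ¬ (i + 1 = j + 1) := fun e => h (add_right_cancel e)
      simp [Matrix.one_apply, h, h']
  · intro b _ hb
    simp [hb]
  · simp

lemma cShift_unitary_right (T : ℕ) [NeZero T] : cShift T * (cShift T)ᴴ = 1 := by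
  ext i j
  simp only [Matrix.mul_apply, Matrix.conjTranspose_apply, cShift, Matrix.of_apply]
  rw [Finset.sum_eq_single (i - 1)]
  · by_cases h : i = j
    · simp [h, Matrix.one_apply, sub_add_cancel]
    · simp [Matrix.one_apply, h, sub_add_cancel]
      intro h'; exact absurd (by rw [← sub_add_cancel i 1, ← sub_add_cancel j 1, h']) h
  · intro b _ hb
    rw [if_neg (fun e : i = b + 1 => hb (by rw [e]; exact (add_sub_cancel_right b 1).symm ▸ rfl)), zero_mul]
  · simp

lemma cShift_pow_T (T : ℕ) [NeZero T] : cShift T ^ T = 1 := by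
  rw [cShift_pow]
  ext i j
  simp [Matrix.one_apply, Fin.natCast_self, eq_comm]


lemma euc_inner_eq {m : ℕ} (x y : EuclideanSpace ℂ (Fin m)) :
    (inner ℂ x y : ℂ) = ∑ i, (starRingEnd ℂ) (x i) * y i := by
  simp [PiLp.inner_apply, RCLike.inner_apply]
  exact Finset.sum_congr rfl fun _ _ => mul_comm _ _

-- a matrix whose columns form an orthonormal family has `Aᴴ * A = 1`
lemma colOrtho_mul {m T : ℕ} (f : Fin T → EuclideanSpace ℂ (Fin m))
    (hf : Orthonormal ℂ f) :
    (Matrix.of fun i j => f j i)ᴴ * (Matrix.of fun i j => f j i) = 1 := by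
  ext j k
  rw [orthonormal_iff_ite] at hf
  have := hf j k
  rw [euc_inner_eq] at this
  simp only [Matrix.mul_apply, Matrix.conjTranspose_apply, Matrix.of_apply, Matrix.one_apply]
  simpa using this


theorem stmt_14 (T n : ℕ) [NeZero T] [NeZero n] (h2T : 2 * T ≤ n)
    (v : Fin T → Fin n → ℂ)
    (hnz : ∀ k, v k ≠ 0)
    (hli : LinearIndependent ℂ v) :
    (cShift T)ᴴ * cShift T = 1 ∧ cShift T * (cShift T)ᴴ = 1 ∧ cShift T ^ T = 1 ∧
    ∃ (Vhat : Matrix (Fin n) (Fin T) ℂ) (Khat That : Matrix (Fin n) (Fin n) ℂ)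
      (p : Fin T → ℂ[X]),
      Vhatᴴ * Vhat = 1 ∧
      Khat * Khat = Khat ∧ Khatᴴ = Khat ∧
      That * That = That ∧ Thatᴴ = That ∧
      ∀ k : Fin T,
        (Khat * (Vhat * aeval (cShift T) (p k) * Vhatᴴ) * That).mulVec (v 0) = v k := by
  refine ⟨cShift_unitary_left T, cShift_unitary_right T, cShift_pow_T T, ?_⟩
  classical
  let v' : Fin T → EuclideanSpace ℂ (Fin n) :=
    fun k => (WithLp.linearEquiv 2 ℂ (Fin n → ℂ)).symm (v k)
  have hli' : LinearIndependent ℂ v' :=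
    hli.map' (WithLp.linearEquiv 2 ℂ (Fin n → ℂ)).symm.toLinearMap (LinearEquiv.ker _)
  let W : Submodule ℂ (EuclideanSpace ℂ (Fin n)) := Submodule.span ℂ (Set.range v')
  have hmem : ∀ k, v' k ∈ W := fun k => Submodule.subset_span ⟨k, rfl⟩
  have hrank : Module.finrank ℂ W = T := by
    rw [finrank_span_eq_card hli', Fintype.card_fin]
  let b0 : OrthonormalBasis (Fin T) ℂ W :=
    (stdOrthonormalBasis ℂ W).reindex (finCongr hrank)
  have hb0 : Orthonormal ℂ (fun j : Fin T => ((b0 j : EuclideanSpace ℂ (Fin n)))) := by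
    have := b0.orthonormal
    rwa [orthonormal_iff_ite] at this ⊢
  -- the matrix of the basis b0
  let B : Matrix (Fin n) (Fin T) ℂ := Matrix.of fun i l => (b0 l : EuclideanSpace ℂ (Fin n)) i
  have hBB : Bᴴ * B = 1 := colOrtho_mul _ hb0
  -- B * Bᴴ is the orthogonal projection onto W
  have hproj : ∀ x : EuclideanSpace ℂ (Fin n), x ∈ W →
      (B * Bᴴ).mulVec (fun i => x i) = fun i => x i := by
    intro x hx
    have hs := b0.sum_repr ⟨x, hx⟩
    funext i
    have hcoe2 : ∑ l, b0.repr ⟨x, hx⟩ l * (b0 l : EuclideanSpace ℂ (Fin n)) i = x i := by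
      have h := congrArg
        (fun z : W => EuclideanSpace.projₗ (𝕜 := ℂ) i (z : EuclideanSpace ℂ (Fin n))) hs
      simpa using h
    rw [← Matrix.mulVec_mulVec]
    simp only [Matrix.mulVec, dotProduct, Matrix.conjTranspose_apply, Matrix.of_apply, B]
    calc ∑ l, (b0 l : EuclideanSpace ℂ (Fin n)) i * ∑ i', (starRingEnd ℂ) ((b0 l : EuclideanSpace ℂ (Fin n)) i') * x i'
        = ∑ l, b0.repr ⟨x, hx⟩ l * (b0 l : EuclideanSpace ℂ (Fin n)) i := by
          refine Finset.sum_congr rfl fun l _ => ?_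
          rw [b0.repr_apply_apply, mul_comm, Submodule.coe_inner, euc_inner_eq]
      _ = x i := hcoe2
  -- coefficient vector of v 0
  have hwnz : Bᴴ.mulVec (v 0) ≠ 0 := by
    intro h0
    apply hnz 0
    have hfix := hproj (v' 0) (hmem 0)
    rw [show (fun i => v' 0 i) = v 0 from rfl] at hfix
    rw [← Matrix.mulVec_mulVec, h0, Matrix.mulVec_zero] at hfix
    exact hfix.symm
  let wv : EuclideanSpace ℂ (Fin T) :=
    (WithLp.linearEquiv 2 ℂ (Fin T → ℂ)).symm (Bᴴ.mulVec (v 0))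
  have hwv : wv ≠ 0 := by
    simpa [wv] using hwnz
  have hnw : (‖wv‖ : ℂ) ≠ 0 := by
    simpa using norm_ne_zero_iff.mpr hwv
  let u0 : EuclideanSpace ℂ (Fin T) := ((‖wv‖ : ℂ))⁻¹ • wv
  have hu0 : ‖u0‖ = 1 := by
    rw [show u0 = ((‖wv‖ : ℂ))⁻¹ • wv from rfl, norm_smul, norm_inv, Complex.norm_real,
      norm_norm, inv_mul_cancel₀ (norm_ne_zero_iff.mpr hwv)]
  have horth0 : Orthonormal ℂ (Set.restrict {(0 : Fin T)} (fun _ : Fin T => u0)) := by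
    constructor
    · intro i; exact hu0
    · intro i j hij
      exact absurd (Subtype.ext (by
        have hi := i.2; have hj := j.2
        simp only [Set.mem_singleton_iff] at hi hj
        rw [hi, hj])) hij
  have hrankT : Module.finrank ℂ (EuclideanSpace ℂ (Fin T)) = Fintype.card (Fin T) := by
    simp [finrank_euclideanSpace]
  obtain ⟨β, hβ0⟩ := horth0.exists_orthonormalBasis_extension_of_card_eq hrankT
  have hβ0' : β 0 = u0 := hβ0 0 rfl
  have hwvβ : wv = (‖wv‖ : ℂ) • β 0 := by
    rw [hβ0', smul_inv_smul₀ hnw]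
  -- the rotation matrix
  let N : Matrix (Fin T) (Fin T) ℂ := Matrix.of fun i j => β j i
  have hNN : Nᴴ * N = 1 := colOrtho_mul (⇑β) β.orthonormal
  have hNN' : N * Nᴴ = 1 := mul_eq_one_comm.mp hNN
  let Vhat : Matrix (Fin n) (Fin T) ℂ := B * N
  have hVV : Vhatᴴ * Vhat = 1 := by
    show (B * N)ᴴ * (B * N) = 1
    rw [Matrix.conjTranspose_mul, Matrix.mul_assoc, ← Matrix.mul_assoc Bᴴ B N, hBB,
      Matrix.one_mul, hNN]
  let P : Matrix (Fin n) (Fin n) ℂ := Vhat * Vhatᴴ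
  have hP : P = B * Bᴴ := by
    show B * N * (B * N)ᴴ = B * Bᴴ
    rw [Matrix.conjTranspose_mul, Matrix.mul_assoc, ← Matrix.mul_assoc N Nᴴ Bᴴ, hNN',
      Matrix.one_mul]
  have hPfix : ∀ k, P.mulVec (v k) = v k := by
    intro k
    rw [hP]
    have hfix := hproj (v' k) (hmem k)
    rwa [show (fun i => v' k i) = v k from rfl] at hfix
  have hPherm : Pᴴ = P := by
    show (Vhat * Vhatᴴ)ᴴ = Vhat * Vhatᴴ
    rw [Matrix.conjTranspose_mul, Matrix.conjTranspose_conjTranspose]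
  have hPP : P * P = P := by
    show Vhat * Vhatᴴ * (Vhat * Vhatᴴ) = Vhat * Vhatᴴ
    rw [Matrix.mul_assoc, ← Matrix.mul_assoc Vhatᴴ Vhat Vhatᴴ, hVV, Matrix.one_mul]
  -- the coefficient vectors
  let y : Fin T → Fin T → ℂ := fun k => Vhatᴴ.mulVec (v k)
  have hy0 : y 0 = fun j => if j = 0 then (‖wv‖ : ℂ) else 0 := by
    funext j
    show (Vhatᴴ.mulVec (v 0)) j = _
    have h1 : Vhatᴴ = Nᴴ * Bᴴ := by
      show (B * N)ᴴ = Nᴴ * Bᴴ; rw [Matrix.conjTranspose_mul]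
    rw [h1, ← Matrix.mulVec_mulVec]
    have h2 : ∀ l, (Bᴴ.mulVec (v 0)) l = wv l := fun l => rfl
    have h3 : (Nᴴ.mulVec (Bᴴ.mulVec (v 0))) j
        = ∑ l, (starRingEnd ℂ) (β j l) * wv l := by
      simp only [Matrix.mulVec, dotProduct, Matrix.conjTranspose_apply,
        Matrix.of_apply, N]
      exact Finset.sum_congr rfl fun l _ => rfl
    rw [h3, ← euc_inner_eq]
    conv_lhs => rw [hwvβ]
    rw [inner_smul_right]
    have := orthonormal_iff_ite.mp β.orthonormal j 0
    rw [this]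
    by_cases hj : j = 0 <;> simp [hj]
  -- the polynomials
  let p : Fin T → Polynomial ℂ := fun k => ∑ j : Fin T, C (y k j * (‖wv‖ : ℂ)⁻¹) * X ^ (j : ℕ)
  have haeval : ∀ k, aeval (cShift T) (p k)
      = ∑ j : Fin T, (y k j * (‖wv‖ : ℂ)⁻¹) • cShift T ^ (j : ℕ) := by
    intro k
    simp [p, map_sum, Algebra.smul_def]
  have hstep : ∀ k, (aeval (cShift T) (p k)).mulVec (y 0) = y k := by
    intro k
    funext i
    rw [haeval, hy0]
    show ∑ l, (∑ j : Fin T, (y k j * (‖wv‖ : ℂ)⁻¹) • cShift T ^ (j : ℕ)) i l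
        * (if l = 0 then (‖wv‖ : ℂ) else 0) = y k i
    have hCe : ∀ (m : ℕ) (l : Fin T), (cShift T ^ m) i l = if i = l + (m : Fin T) then 1 else 0 := by
      intro m l; rw [cShift_pow]; rfl
    calc ∑ l, (∑ j : Fin T, (y k j * (‖wv‖ : ℂ)⁻¹) • cShift T ^ (j : ℕ)) i l
          * (if l = 0 then (‖wv‖ : ℂ) else 0)
        = ∑ l, (∑ j : Fin T, (y k j * (‖wv‖ : ℂ)⁻¹) * (if i = l + j then 1 else 0))
          * (if l = 0 then (‖wv‖ : ℂ) else 0) := by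
          refine Finset.sum_congr rfl fun l _ => ?_
          congr 1
          rw [Matrix.sum_apply]
          refine Finset.sum_congr rfl fun j _ => ?_
          rw [Matrix.smul_apply, hCe, smul_eq_mul, Fin.cast_val_eq_self]
      _ = y k i := by
          rw [Finset.sum_eq_single (0 : Fin T)]
          · rw [if_pos rfl]
            rw [Finset.sum_mul]
            rw [Finset.sum_eq_single i]
            · simp [mul_assoc, inv_mul_cancel₀ hnw]
            · intro j _ hj
              rw [if_neg (by simpa [eq_comm] using hj), mul_zero, zero_mul]
            · simp
          · intro l _ hl; rw [if_neg hl, mul_zero]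
          · simp
  refine ⟨Vhat, P, P, p, hVV, hPP, hPherm, hPP, hPherm, fun k => ?_⟩
  have e1 : (P * (Vhat * aeval (cShift T) (p k) * Vhatᴴ) * P) *ᵥ (v 0)
      = P *ᵥ ((Vhat * aeval (cShift T) (p k) * Vhatᴴ) *ᵥ (P *ᵥ v 0)) := by
    rw [Matrix.mulVec_mulVec, Matrix.mulVec_mulVec]
  rw [e1, hPfix 0]
  have e2 : (Vhat * aeval (cShift T) (p k) * Vhatᴴ) *ᵥ (v 0)
      = Vhat *ᵥ (aeval (cShift T) (p k) *ᵥ (Vhatᴴ *ᵥ v 0)) := by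
    rw [Matrix.mulVec_mulVec, Matrix.mulVec_mulVec]
  rw [e2, show Vhatᴴ *ᵥ (v 0) = y 0 from rfl, hstep k,
    show Vhat *ᵥ (y k) = P *ᵥ (v k) from Matrix.mulVec_mulVec _ _ _]
  rw [hPfix k]
  exact hPfix k
end

section
/- Let T, n be positive integers with 2T ≤ n and let ε, δ > 0. Let (x_t)_{t≥0} be a sequence in ℂ^n and let (x̃_t)_{t≥0} be a T-periodic sequence in ℂ^n (x̃_{t+T} = x̃_t) such that ‖x_t − x̃_t‖₂ ≤ ε for all t ≥ 0, and suppose x̃_0, …, x̃_{T−1} are nonzero and linearly independent. Then there exist a unitary U ∈ ℂ^{n×n} with U^T = 1_n, orthogonal projections K̂, T̂, P ∈ ℂ^{n×n} with PU = UP, and polynomials p_0, …, p_{T−1} ∈ ℂ[z] such that ‖x_t − K̂ (P p_{t mod T}(U) P) T̂ x̃_0‖₂ ≤ ε for every t ≥ 0. -/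
open Matrix Polynomial BigOperators

/-- The Euclidean norm `‖x‖₂ = √(Σ_i ‖x_i‖²)` on `ℂ^n`. -/
noncomputable def enorm2 {n : ℕ} (x : Fin n → ℂ) : ℝ :=
  Real.sqrt (∑ i, ‖x i‖ ^ 2)

namespace Stmt15Aux

variable {n : ℕ}

lemma vecMulVec_conjT (a b : Fin n → ℂ) :
    (vecMulVec a (star b))ᴴ = vecMulVec b (star a) := by
  ext i j
  simp [vecMulVec_apply, conjTranspose_apply, mul_comm]

lemma vecMulVec_mul (a b c d : Fin n → ℂ) :
    vecMulVec a b * vecMulVec c d = (b ⬝ᵥ c) • vecMulVec a d := by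
  ext i j
  simp only [Matrix.mul_apply, vecMulVec_apply, Matrix.smul_apply, dotProduct, smul_eq_mul,
    Finset.sum_mul]
  exact Finset.sum_congr rfl fun k _ => by ring

lemma vecMulVec_mulVec (a b v : Fin n → ℂ) :
    (vecMulVec a b).mulVec v = (b ⬝ᵥ v) • a := by
  ext i
  simp only [Matrix.mulVec, dotProduct, vecMulVec_apply, Pi.smul_apply, smul_eq_mul,
    Finset.sum_mul]
  exact Finset.sum_congr rfl fun k _ => by ring

lemma sum_mulVec {ι : Type*} (s : Finset ι) (M : ι → Matrix (Fin n) (Fin n) ℂ)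
    (v : Fin n → ℂ) : (∑ i ∈ s, M i).mulVec v = ∑ i ∈ s, (M i).mulVec v := by
  ext j
  simp only [Matrix.mulVec, dotProduct, Finset.sum_apply, Matrix.sum_apply, Finset.sum_mul]
  exact Finset.sum_comm

open Fin.NatCast in
lemma key (T : ℕ) [NeZero T] (g : Fin T → Fin n → ℂ)
    (horth : ∀ j k : Fin T, star (g j) ⬝ᵥ g k = if j = k then (1 : ℂ) else 0) :
    ∃ U : Matrix (Fin n) (Fin n) ℂ,
      Uᴴ * U = 1 ∧ U * Uᴴ = 1 ∧ U ^ T = 1 ∧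
      ∀ m : Fin T, (U ^ (m : ℕ)).mulVec (g 0) = g m := by
  classical
  set S : Fin T → Matrix (Fin n) (Fin n) ℂ :=
    fun k => ∑ m, vecMulVec (g (m + k)) (star (g m)) with hS
  have hmul : ∀ j k : Fin T, S j * S k = S (k + j) := by
    intro j k
    rw [hS]
    rw [Finset.sum_mul_sum]
    simp only [vecMulVec_mul, horth]
    rw [Finset.sum_comm]
    calc (∑ m' : Fin T, ∑ m : Fin T,
          (if m = m' + k then (1:ℂ) else 0) • vecMulVec (g (m + j)) (star (g m')))
        = ∑ m' : Fin T, vecMulVec (g (m' + k + j)) (star (g m')) := by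
          refine Finset.sum_congr rfl fun m' _ => ?_
          rw [Finset.sum_eq_single (m' + k)]
          · simp
          · intro b _ hb; simp [hb]
          · simp
      _ = _ := by
          refine Finset.sum_congr rfl fun m' _ => ?_
          rw [add_assoc]
  have hconj : ∀ k : Fin T, (S k)ᴴ = S (-k) := by
    intro k
    rw [hS]
    rw [Matrix.conjTranspose_sum]
    simp only [vecMulVec_conjT]
    refine Fintype.sum_equiv (Equiv.addRight k) _ _ fun m => ?_
    simp [add_neg_cancel_right]
  have hmv : ∀ j k : Fin T, (S k).mulVec (g j) = g (j + k) := by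
    intro j k
    rw [hS, sum_mulVec]
    simp only [vecMulVec_mulVec, horth]
    rw [Finset.sum_eq_single j]
    · simp
    · intro b _ hb; simp [hb]
    · simp
  set U : Matrix (Fin n) (Fin n) ℂ := S 1 + (1 - S 0) with hUdef
  have hS10 : ∀ k : Fin T, S k * (1 - S 0) = 0 := by
    intro k
    rw [mul_sub, mul_one, hmul, zero_add, sub_self]
  have h0S : ∀ k : Fin T, (1 - S 0) * S k = 0 := by
    intro k
    rw [sub_mul, one_mul, hmul, add_zero, sub_self]
  have h00 : (1 - S 0) * (1 - S 0) = 1 - S 0 := by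
    rw [mul_sub, mul_one, h0S 0, sub_zero]
  have hUpow : ∀ j : ℕ, U ^ j = S (j : Fin T) + (1 - S 0) := by
    intro j
    induction j with
    | zero => simp [add_sub_cancel]
    | succ j ih =>
        rw [pow_succ, ih, hUdef]
        rw [add_mul, mul_add, mul_add, hmul, hS10, h0S, h00]
        rw [add_zero, zero_add]
        congr 1
        push_cast
        rw [add_comm]
  have hUH : Uᴴ = S (-1) + (1 - S 0) := by
    rw [hUdef]
    rw [Matrix.conjTranspose_add, Matrix.conjTranspose_sub, Matrix.conjTranspose_one,
      hconj, hconj, neg_zero]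
  have h1 : Uᴴ * U = 1 := by
    rw [hUH, hUdef, add_mul, mul_add, mul_add, hmul, hS10, h0S, h00]
    simp
  have h2 : U * Uᴴ = 1 := by
    rw [hUH, hUdef, add_mul, mul_add, mul_add, hmul, hS10, h0S, h00]
    simp
  refine ⟨U, h1, h2, ?_, ?_⟩
  · rw [hUpow T, Fin.natCast_self]
    simp
  · intro m
    rw [hUpow, Fin.cast_val_eq_self]
    rw [Matrix.add_mulVec, Matrix.sub_mulVec, Matrix.one_mulVec, hmv, hmv]
    simp

end Stmt15Aux

/-- let `2T ≤ n`, `ε, δ > 0`, `(x_t)` a sequence in `ℂ^n` and `(x̃_t)` a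
`T`-periodic sequence with `‖x_t − x̃_t‖₂ ≤ ε` for all `t`, where `x̃_0,…,x̃_{T−1}` are
nonzero and linearly independent. Then there exist a unitary `U` with `U^T = 1_n`,
orthogonal projections `K̂, T̂, P` with `PU = UP`, and polynomials `p_0,…,p_{T−1}` such
that `‖x_t − K̂ (P p_{t mod T}(U) P) T̂ x̃_0‖₂ ≤ ε` for every `t ≥ 0`
(the system is `(𝕊¹, T, ε)`-controlled). -/
theorem stmt_15 (T n : ℕ) [NeZero T] [NeZero n] (h2T : 2 * T ≤ n)
    (ε δ : ℝ) (hε : 0 < ε) (hδ : 0 < δ)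
    (x xt : ℕ → Fin n → ℂ)
    (hper : ∀ t, xt (t + T) = xt t)
    (hclose : ∀ t, enorm2 (x t - xt t) ≤ ε)
    (hnz : ∀ k : Fin T, xt k ≠ 0)
    (hli : LinearIndependent ℂ fun k : Fin T => xt k) :
    ∃ (U Khat That P : Matrix (Fin n) (Fin n) ℂ) (p : Fin T → ℂ[X]),
      Uᴴ * U = 1 ∧ U * Uᴴ = 1 ∧ U ^ T = 1 ∧
      Khat * Khat = Khat ∧ Khatᴴ = Khat ∧
      That * That = That ∧ Thatᴴ = That ∧
      P * P = P ∧ Pᴴ = P ∧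
      P * U = U * P ∧
      ∀ t : ℕ,
        enorm2 (x t -
          (Khat * (P * aeval U (p ⟨t % T, Nat.mod_lt t (Nat.pos_of_ne_zero (NeZero.ne T))⟩)
            * P) * That).mulVec (xt 0)) ≤ ε := by
  classical
  obtain ⟨T', rfl⟩ : ∃ T', T = T' + 1 := ⟨T - 1, by have := Nat.pos_of_ne_zero (NeZero.ne T); omega⟩
  set T := T' + 1 with hT
  have hmod : ∀ t, xt t = xt (t % T) := by
    intro t
    induction t using Nat.strong_induction_on with
    | _ t ih =>
      rcases lt_or_ge t T with h | h
      · rw [Nat.mod_eq_of_lt h]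
      · obtain ⟨s, rfl⟩ : ∃ s, t = s + T := ⟨t - T, by omega⟩
        rw [hper s, ih s (by omega), Nat.add_mod_right]
  -- Gram–Schmidt in Euclidean space
  haveI : WellFoundedLT (Fin T) := inferInstanceAs (WellFoundedLT (Fin T))
  let F : Fin T → EuclideanSpace ℂ (Fin n) := fun k => WithLp.toLp 2 (xt k)
  have hliF : LinearIndependent ℂ F :=
    hli.map' (WithLp.linearEquiv 2 ℂ (Fin n → ℂ)).symm.toLinearMap (by simp)
  let f : Fin T → EuclideanSpace ℂ (Fin n) := InnerProductSpace.gramSchmidtNormed ℂ F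
  have horthF : Orthonormal ℂ f := InnerProductSpace.gramSchmidtNormed_orthonormal hliF
  let g : Fin T → Fin n → ℂ := fun m => f m
  have horth : ∀ j k : Fin T, star (g j) ⬝ᵥ g k = if j = k then (1 : ℂ) else 0 := by
    intro j k
    have h2 := orthonormal_iff_ite.mp horthF j k
    simpa [PiLp.inner_apply, RCLike.inner_apply, dotProduct, g, mul_comm] using h2
  obtain ⟨U, hU1, hU2, hUT, hUm⟩ := Stmt15Aux.key T g horth
  -- the base vector
  have hgs0 : InnerProductSpace.gramSchmidt ℂ F 0 = F 0 := by
    have h := InnerProductSpace.gramSchmidt_bot (𝕜 := ℂ) F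
    simpa [Fin.bot_eq_zero] using h
  set c : ℝ := ‖F 0‖ with hc
  have hF0 : F 0 ≠ 0 := by
    have := hnz 0
    simpa [F] using this
  have hcne : (c : ℂ) ≠ 0 := by
    simp only [hc, ne_eq, Complex.ofReal_eq_zero, norm_eq_zero]
    exact hF0
  have hf0 : f 0 = (c : ℂ)⁻¹ • F 0 := by
    show InnerProductSpace.gramSchmidtNormed ℂ F 0 = (c : ℂ)⁻¹ • F 0
    rw [InnerProductSpace.gramSchmidtNormed, hgs0]
    norm_num [hc]
  have hxt0 : xt 0 = (c : ℂ) • g 0 := by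
    have : (c : ℂ) • f 0 = F 0 := by
      rw [hf0, smul_smul, mul_inv_cancel₀ hcne, one_smul]
    have h := congrArg WithLp.ofLp this.symm
    simpa [F, g] using h
  -- coefficients
  have hspan : ∀ k : Fin T, ∃ d : Fin T → ℂ, ∑ m, d m • f m = F k := by
    intro k
    have h1 : F k ∈ Submodule.span ℂ (Set.range F) := Submodule.subset_span ⟨k, rfl⟩
    rw [← InnerProductSpace.span_gramSchmidt ℂ F, ← InnerProductSpace.span_gramSchmidtNormed_range] at h1
    exact (Submodule.mem_span_range_iff_exists_fun ℂ).mp h1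
  choose d hd using hspan
  -- the polynomials
  refine ⟨U, 1, 1, 1, fun k => ∑ m : Fin T, Polynomial.C (d k m / (c : ℂ)) * X ^ (m : ℕ),
    hU1, hU2, hUT, by simp, by simp, by simp, by simp, by simp, by simp, by simp, ?_⟩
  intro t
  set k : Fin T := ⟨t % T, Nat.mod_lt t (Nat.pos_of_ne_zero (NeZero.ne T))⟩ with hk
  have hmain : (1 * (1 * aeval U (∑ m : Fin T, Polynomial.C (d k m / (c : ℂ)) * X ^ (m : ℕ))
      * 1) * 1).mulVec (xt 0) = xt t := by
    rw [one_mul, mul_one, one_mul, mul_one]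
    rw [map_sum]
    rw [Stmt15Aux.sum_mulVec]
    have hterm : ∀ m : Fin T,
        (aeval U (Polynomial.C (d k m / (c : ℂ)) * X ^ (m : ℕ))).mulVec (xt 0)
          = d k m • g m := by
      intro m
      rw [_root_.map_mul, aeval_C, map_pow, aeval_X]
      rw [← Algebra.smul_def, Matrix.smul_mulVec]
      rw [hxt0, Matrix.mulVec_smul, hUm m]
      rw [smul_smul, div_mul_cancel₀ _ hcne]
    rw [Finset.sum_congr rfl fun m _ => hterm m]
    have hdk : ∑ m, d k m • g m = xt k := by
      have := hd k
      have h := congrArg WithLp.ofLp this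
      simpa [F, g] using h
    rw [hdk]
    exact (hmod t).symm
  rw [hmain]
  exact hclose t
end

section
/- Let n be a positive integer, ε > 0, and let H, F, P_H, Q_H ∈ ℂ^{n×n} satisfy: P_H and Q_H are orthogonal projections (P_H² = P_H = P_H^*, Q_H² = Q_H = Q_H^*), P_H H = H P_H, and ‖(P_H F − H P_H) Q_H‖ ≤ ε in the spectral norm. Define the 2n×2n block matrices Q̂ = [[0_n, P_H],[P_H, 0_n]], X̂ = [[H, 0_n],[0_n, F]], P = [[1_n − P_H, 0_n],[0_n, Q_H]], and Z = [[0_n, 1_n],[1_n, 0_n]]. Then ‖(Q̂X̂ − X̂Q̂)P‖ ≤ ε, Q̂⁴ = Q̂², and Q̂² = ZQ̂ = (Q̂²)^*; that is, (Q̂, X̂) is an ε-approximate solvent pair of the structured matrix equations (QX − XQ)P = 0, Q⁴ = Q², Q² = ZQ = (Q²)^*. -/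
open Matrix BigOperators
open scoped Matrix.Norms.L2Operator

lemma norm_fromBlocks_offdiag_le {n : ℕ} [NeZero n] (E : Matrix (Fin n) (Fin n) ℂ) :
    ‖(Matrix.fromBlocks 0 E 0 0 : Matrix (Fin n ⊕ Fin n) (Fin n ⊕ Fin n) ℂ)‖ ≤ ‖E‖ := by
  set ι : Matrix (Fin n ⊕ Fin n) (Fin n) ℂ := Matrix.fromRows 1 0 with hιdef
  set κ : Matrix (Fin n ⊕ Fin n) (Fin n) ℂ := Matrix.fromRows 0 1 with hκdef
  have hικ : (Matrix.fromBlocks 0 E 0 0 : Matrix (Fin n ⊕ Fin n) (Fin n ⊕ Fin n) ℂ)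
      = ι * (E * κᴴ) := by
    rw [hκdef, Matrix.conjTranspose_fromRows_eq_fromCols_conjTranspose,
      Matrix.mul_fromCols, hιdef, Matrix.fromRows_mul,
      Matrix.one_mul, Matrix.zero_mul]
    rw [← Matrix.fromRows_fromCols_eq_fromBlocks]
    ext i j
    cases i <;> cases j <;> simp
  have hι1 : ‖ι‖ = 1 := by
    have h := Matrix.l2_opNorm_conjTranspose_mul_self ι
    have hmul : ιᴴ * ι = 1 := by
      rw [hιdef, Matrix.conjTranspose_fromRows_eq_fromCols_conjTranspose,
        Matrix.fromCols_mul_fromRows]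
      simp
    rw [hmul, norm_one] at h
    have h0 : 0 ≤ ‖ι‖ := norm_nonneg _
    nlinarith
  have hκ1 : ‖κᴴ‖ = 1 := by
    rw [Matrix.l2_opNorm_conjTranspose]
    have h := Matrix.l2_opNorm_conjTranspose_mul_self κ
    have hmul : κᴴ * κ = 1 := by
      rw [hκdef, Matrix.conjTranspose_fromRows_eq_fromCols_conjTranspose,
        Matrix.fromCols_mul_fromRows]
      simp
    rw [hmul, norm_one] at h
    have h0 : 0 ≤ ‖κ‖ := norm_nonneg _
    nlinarith
  calc ‖(Matrix.fromBlocks 0 E 0 0 : Matrix (Fin n ⊕ Fin n) (Fin n ⊕ Fin n) ℂ)‖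
      = ‖ι * (E * κᴴ)‖ := by rw [hικ]
    _ ≤ ‖ι‖ * ‖E * κᴴ‖ := Matrix.l2_opNorm_mul _ _
    _ ≤ ‖ι‖ * (‖E‖ * ‖κᴴ‖) :=
        mul_le_mul_of_nonneg_left (Matrix.l2_opNorm_mul _ _) (norm_nonneg _)
    _ = ‖E‖ := by rw [hι1, hκ1]; ring

lemma my_fromBlocks_sub {n : ℕ} (A B C D A' B' C' D' : Matrix (Fin n) (Fin n) ℂ) :
    Matrix.fromBlocks A B C D - Matrix.fromBlocks A' B' C' D' =
      Matrix.fromBlocks (A - A') (B - B') (C - C') (D - D') := by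
  ext i j
  cases i <;> cases j <;> simp [Matrix.fromBlocks]

/-- let `P_H, Q_H` be orthogonal projections, `P_H H = H P_H`, and
`‖(P_H F − H P_H) Q_H‖ ≤ ε` in the spectral (L2 operator) norm. Then the block matrices
`Q̂ = [[0, P_H],[P_H, 0]]`, `X̂ = [[H, 0],[0, F]]`, `P = [[1 − P_H, 0],[0, Q_H]]`,
`Z = [[0, 1],[1, 0]]` satisfy `‖(Q̂X̂ − X̂Q̂)P‖ ≤ ε`, `Q̂⁴ = Q̂²` and
`Q̂² = ZQ̂ = (Q̂²)^*`; that is, `(Q̂, X̂)` is an ε-approximate solvent pair of the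
structured matrix equations `(QX − XQ)P = 0`, `Q⁴ = Q²`, `Q² = ZQ = (Q²)^*`. -/
theorem stmt_17 (n : ℕ) [NeZero n] (ε : ℝ) (hε : 0 < ε)
    (H F PH QH : Matrix (Fin n) (Fin n) ℂ)
    (hPH : PH * PH = PH ∧ PHᴴ = PH)
    (hQH : QH * QH = QH ∧ QHᴴ = QH)
    (hcomm : PH * H = H * PH)
    (happrox : ‖(PH * F - H * PH) * QH‖ ≤ ε) :
    ‖(Matrix.fromBlocks 0 PH PH 0 * Matrix.fromBlocks H 0 0 F -
        Matrix.fromBlocks H 0 0 F * Matrix.fromBlocks 0 PH PH 0) *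
        Matrix.fromBlocks (1 - PH) 0 0 QH‖ ≤ ε ∧
    Matrix.fromBlocks 0 PH PH 0 ^ 4 = Matrix.fromBlocks 0 PH PH 0 ^ 2 ∧
    Matrix.fromBlocks 0 PH PH 0 ^ 2 =
      Matrix.fromBlocks 0 1 1 0 * Matrix.fromBlocks 0 PH PH 0 ∧
    Matrix.fromBlocks 0 1 1 0 * Matrix.fromBlocks 0 PH PH 0 =
      (Matrix.fromBlocks 0 PH PH 0 ^ 2)ᴴ := by
  have hbl : (Matrix.fromBlocks 0 PH PH 0 * Matrix.fromBlocks H 0 0 F -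
      Matrix.fromBlocks H 0 0 F * Matrix.fromBlocks 0 PH PH 0) *
      Matrix.fromBlocks (1 - PH) 0 0 QH
      = Matrix.fromBlocks 0 ((PH * F - H * PH) * QH) ((PH * H - F * PH) * (1 - PH)) 0 := by
    rw [Matrix.fromBlocks_multiply, Matrix.fromBlocks_multiply, my_fromBlocks_sub,
      Matrix.fromBlocks_multiply]
    simp
  have hzero : (PH * H - F * PH) * (1 - PH) = 0 := by
    have h1 : PH * H * PH = PH * H := by
      rw [hcomm, Matrix.mul_assoc, hPH.1, ← hcomm]
    rw [sub_mul, mul_sub, mul_sub, mul_one, mul_one, h1, Matrix.mul_assoc F, hPH.1]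
    abel
  have hsq : Matrix.fromBlocks 0 PH PH 0 ^ 2
      = (Matrix.fromBlocks PH 0 0 PH : Matrix (Fin n ⊕ Fin n) (Fin n ⊕ Fin n) ℂ) := by
    rw [pow_two]
    simp [Matrix.fromBlocks_multiply, hPH.1]
  refine ⟨?_, ?_, ?_, ?_⟩
  · rw [hbl, hzero]
    exact le_trans (norm_fromBlocks_offdiag_le _) happrox
  · rw [show (4:ℕ) = 2 * 2 from rfl, pow_mul, hsq, pow_two]
    simp [Matrix.fromBlocks_multiply, hPH.1]
  · rw [hsq]
    simp [Matrix.fromBlocks_multiply]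
  · rw [hsq]
    simp [Matrix.fromBlocks_multiply, Matrix.fromBlocks_conjTranspose, hPH.2]
end
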